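/- Let D₊, D₋, M ∈ ℝ^{N×N} satisfy the periodic upwind SBP property M D₊ + D₋ᵀ M = 0 with M symmetric positive definite and diagonal. Suppose v, w, ν, ω : ℝ → ℝ^N satisfy v' = −D₋ω − β(v²+w²)⊙w, w' = D₋ν + β(v²+w²)⊙v, τν' = D₊w − ω, τω' = −D₊v + ν, with τ > 0. Then the discrete mass M(t) = vᵀMv + wᵀMw + τνᵀMν + τωᵀMω is constant in time. -/

import Mathlib

/-!
Energy method. Along solutions, the derivative of the mass is twice the sum of the `M`-inner
products of each unknown with its right-hand side. The periodic upwind SBP property is a discrete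
integration by parts, `⟪x, D₊ y⟫_M = -⟪D₋ x, y⟫_M`, so the two pairs of spatial coupling terms
cancel; the relaxation terms `±⟪ν, ω⟫_M` cancel by symmetry of `M`; and since `M` is diagonal,
pointwise multiplication is `M`-self-adjoint, so the nonlinear terms
`∓β ⟪v, (v² + w²) w⟫_M` cancel as well.
-/

open Matrix

section Calculus

variable {ι κ : Type*} [Fintype ι] [Fintype κ] {t : ℝ}

theorem HasDerivAt.dotProduct {x y : ℝ → ι → ℝ} {x' y' : ι → ℝ}
    (hx : HasDerivAt x x' t) (hy : HasDerivAt y y' t) :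
    HasDerivAt (fun s => x s ⬝ᵥ y s) (x' ⬝ᵥ y t + x t ⬝ᵥ y') t := by
  have h := HasDerivAt.fun_sum (u := Finset.univ) fun i _ =>
    (hasDerivAt_pi.mp hx i).fun_mul (hasDerivAt_pi.mp hy i)
  rw [Finset.sum_add_distrib] at h
  exact h

theorem HasDerivAt.mulVec (A : Matrix κ ι ℝ) {x : ℝ → ι → ℝ} {x' : ι → ℝ}
    (hx : HasDerivAt x x' t) : HasDerivAt (fun s => A *ᵥ x s) (A *ᵥ x') t :=
  A.mulVecLin.toContinuousLinearMap.hasFDerivAt.comp_hasDerivAt t hx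

end Calculus

namespace Matrix

variable {ι : Type*} [Fintype ι]

theorem IsSymm.dotProduct_mulVec_comm {M : Matrix ι ι ℝ} (hM : M.IsSymm) (x y : ι → ℝ) :
    x ⬝ᵥ M *ᵥ y = y ⬝ᵥ M *ᵥ x := by
  rw [dotProduct_mulVec, ← mulVec_transpose, hM.eq, dotProduct_comm]

theorem dotProduct_mulVec_mulVec_eq_neg_of_upwindSBP {M Dp Dm : Matrix ι ι ℝ} (hM : M.IsSymm)
    (hSBP : M * Dp + Dmᵀ * M = 0) (x y : ι → ℝ) :
    x ⬝ᵥ M *ᵥ (Dp *ᵥ y) = -(y ⬝ᵥ M *ᵥ (Dm *ᵥ x)) := by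
  rw [mulVec_mulVec, eq_neg_of_add_eq_zero_left hSBP, neg_mulVec, dotProduct_neg,
    ← mulVec_mulVec, dotProduct_mulVec, vecMul_transpose, hM.dotProduct_mulVec_comm]

theorem dotProduct_diagonal_mulVec_mul_comm [DecidableEq ι] (d s x y : ι → ℝ) :
    x ⬝ᵥ diagonal d *ᵥ (fun i => s i * y i) = y ⬝ᵥ diagonal d *ᵥ (fun i => s i * x i) :=
  Finset.sum_congr rfl fun i _ => by simp only [mulVec_diagonal]; ring

theorem IsSymm.hasDerivAt_dotProduct_mulVec_self {M : Matrix ι ι ℝ}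
    (hM : M.IsSymm) {x : ℝ → ι → ℝ} {x' : ι → ℝ} {t : ℝ} (hx : HasDerivAt x x' t) :
    HasDerivAt (fun s => x s ⬝ᵥ M *ᵥ x s) (2 * (x t ⬝ᵥ M *ᵥ x')) t := by
  convert hx.dotProduct (hx.mulVec M) using 1
  rw [hM.dotProduct_mulVec_comm x']
  ring

end Matrix

theorem hyperbolizedNLS_mass_rate_eq_zero {ι : Type*} [Fintype ι] [DecidableEq ι]
    {d : ι → ℝ} {Dp Dm : Matrix ι ι ℝ} (hSBP : diagonal d * Dp + Dmᵀ * diagonal d = 0)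
    {τ : ℝ} (hτ : τ ≠ 0) (s v w ν ω : ι → ℝ) :
    v ⬝ᵥ diagonal d *ᵥ (-(Dm *ᵥ ω) - fun i => s i * w i)
      + w ⬝ᵥ diagonal d *ᵥ (Dm *ᵥ ν + fun i => s i * v i)
      + τ * (ν ⬝ᵥ diagonal d *ᵥ (τ⁻¹ • (Dp *ᵥ w - ω)))
      + τ * (ω ⬝ᵥ diagonal d *ᵥ (τ⁻¹ • (-(Dp *ᵥ v) + ν))) = 0 := by
  have hM := isSymm_diagonal d
  simp only [mulVec_add, mulVec_sub, mulVec_neg, mulVec_smul, dotProduct_add, dotProduct_sub,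
    dotProduct_neg, dotProduct_smul, smul_eq_mul]
  rw [dotProduct_mulVec_mulVec_eq_neg_of_upwindSBP hM hSBP ν w,
    dotProduct_mulVec_mulVec_eq_neg_of_upwindSBP hM hSBP ω v, dotProduct_diagonal_mulVec_mul_comm d s v w, hM.dotProduct_mulVec_comm ν ω]
  field_simp
  ring

theorem hyperbolized_nls_mass_conservation_general (N : ℕ) (β τ : ℝ) (hτ : 0 < τ)
    (M Dp Dm : Matrix (Fin N) (Fin N) ℝ)
    (d : Fin N → ℝ) (hM : M = Matrix.diagonal d)
    (hSBP : M * Dp + Dm.transpose * M = 0)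
    (v w ν ω : ℝ → Fin N → ℝ)
    (hv : ∀ t : ℝ, HasDerivAt v
      (-(Dm.mulVec (ω t)) - fun i => β * (v t i ^ 2 + w t i ^ 2) * w t i) t)
    (hw : ∀ t : ℝ, HasDerivAt w
      (Dm.mulVec (ν t) + fun i => β * (v t i ^ 2 + w t i ^ 2) * v t i) t)
    (hν : ∀ t : ℝ, HasDerivAt ν (τ⁻¹ • (Dp.mulVec (w t) - ω t)) t)
    (hω : ∀ t : ℝ, HasDerivAt ω (τ⁻¹ • (-(Dp.mulVec (v t)) + ν t)) t) :
    ∀ t₁ t₂ : ℝ,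
      (dotProduct (v t₁) (M.mulVec (v t₁))
        + dotProduct (w t₁) (M.mulVec (w t₁))
        + τ * dotProduct (ν t₁) (M.mulVec (ν t₁))
        + τ * dotProduct (ω t₁) (M.mulVec (ω t₁)))
      = (dotProduct (v t₂) (M.mulVec (v t₂))
        + dotProduct (w t₂) (M.mulVec (w t₂))
        + τ * dotProduct (ν t₂) (M.mulVec (ν t₂))
        + τ * dotProduct (ω t₂) (M.mulVec (ω t₂))) := by
  subst hM
  have hsymm := isSymm_diagonal d
  have hmass : ∀ t, HasDerivAt (fun t => v t ⬝ᵥ diagonal d *ᵥ v t + w t ⬝ᵥ diagonal d *ᵥ w t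
      + τ * ν t ⬝ᵥ diagonal d *ᵥ ν t + τ * ω t ⬝ᵥ diagonal d *ᵥ ω t) 0 t := fun t => by
    refine ((((hsymm.hasDerivAt_dotProduct_mulVec_self (hv t)).add
      (hsymm.hasDerivAt_dotProduct_mulVec_self (hw t))).add
      ((hsymm.hasDerivAt_dotProduct_mulVec_self (hν t)).const_mul τ)).add
      ((hsymm.hasDerivAt_dotProduct_mulVec_self (hω t)).const_mul τ)).congr_deriv ?_
    linear_combination 2 * hyperbolizedNLS_mass_rate_eq_zero hSBP hτ.ne'
      (fun i => β * (v t i ^ 2 + w t i ^ 2)) (v t) (w t) (ν t) (ω t)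
  exact is_const_of_deriv_eq_zero (fun t => (hmass t).differentiableAt) (fun t => (hmass t).deriv)

/-- Semidiscrete mass conservation for the hyperbolized NLS semidiscretization
with periodic upwind SBP operators:
`M(t) = vᵀMv + wᵀMw + τνᵀMν + τωᵀMω` is constant in time. -/
theorem hyperbolized_nls_mass_conservation (N : ℕ) (β τ : ℝ) (hτ : 0 < τ)
    (M Dp Dm : Matrix (Fin N) (Fin N) ℝ)
    (d : Fin N → ℝ) (hd : ∀ i, 0 < d i) (hM : M = Matrix.diagonal d)
    (hSBP : M * Dp + Dm.transpose * M = 0)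
    (v w ν ω : ℝ → Fin N → ℝ)
    (hv : ∀ t : ℝ, HasDerivAt v
      (-(Dm.mulVec (ω t)) - fun i => β * (v t i ^ 2 + w t i ^ 2) * w t i) t)
    (hw : ∀ t : ℝ, HasDerivAt w
      (Dm.mulVec (ν t) + fun i => β * (v t i ^ 2 + w t i ^ 2) * v t i) t)
    (hν : ∀ t : ℝ, HasDerivAt ν (τ⁻¹ • (Dp.mulVec (w t) - ω t)) t)
    (hω : ∀ t : ℝ, HasDerivAt ω (τ⁻¹ • (-(Dp.mulVec (v t)) + ν t)) t) :
    ∀ t₁ t₂ : ℝ,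
      (dotProduct (v t₁) (M.mulVec (v t₁))
        + dotProduct (w t₁) (M.mulVec (w t₁))
        + τ * dotProduct (ν t₁) (M.mulVec (ν t₁))
        + τ * dotProduct (ω t₁) (M.mulVec (ω t₁)))
      = (dotProduct (v t₂) (M.mulVec (v t₂))
        + dotProduct (w t₂) (M.mulVec (w t₂))
        + τ * dotProduct (ν t₂) (M.mulVec (ν t₂))
        + τ * dotProduct (ω t₂) (M.mulVec (ω t₂))) :=
  hyperbolized_nls_mass_conservation_general N β τ hτ M Dp Dm d hM hSBP v w ν ω hv hw hν hω
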